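/- arXiv:2004.04920 — 2 statements merged into one kernel-verified Lean document; each statement's English description precedes it below -/
import Mathlib

section
/- Let λ ≥ 2 and h ≥ 1 be coprime integers, let a : ℕ → ℂ be λ-automatic and multiplicative, and let χ : ℕ → ℂ be a Dirichlet character of modulus hλ such that a(n) = χ(n) for all n ≥ 1 coprime to hλ. Let q be a prime dividing h and set α = ν_q(hλ). Suppose χ_q is a Dirichlet character of modulus q^α and χ' is a Dirichlet character of modulus hλ/q^α with χ(n) = χ_q(n)·χ'(n) for all n, and let m be an integer with m ≡ 1 (mod q^α) and m ≡ q (mod hλ/q^α). Then the sequence n ↦ χ_q(n / q^{ν_q(n)}) · a(q^{ν_q(n)}) / χ(m)^{ν_q(n)} is periodic on the positive integers. -/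
/-!
Write `M' = hλ / q^α`, so that `χ = χ_q · χ'` and `χ(m) = χ'(q) =: E`. The sequence in question is
`n ↦ χ_q(v) · w(j)` for `n = q^j v` with `q ∤ v`, where `w(K) = a(q^K) / E^K`; it is periodic as soon
as `χ_q(v) · w(K)` is independent of `v` and of `K` for all large `K`.

Since the `λ`-kernel of `a` is finite, two of the sequences `n ↦ a(λ^(q^i) n + q^i)` coincide, say for
`k < k'`. For `K ≥ k + α` and `q ∤ v`, choose `n ≡ 0 (mod M')` by the Chinese remainder theorem so that
`λ^(q^k) n + q^k = q^K B` with `B ≡ v (mod q^α)`. Then `λ^(q^k') n + q^k' = q^k C`, where the residue of `C`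
modulo `q^α` depends only on `k, k'`. Evaluating `a` on both sides by multiplicativity, the values of `χ'`
being pinned down modulo `M'`, gives `χ_q(v) · w(K) = χ_q(C) · w(k) · E^(k' - k)`.
-/

/-- A sequence `f : ℕ → ℂ` is `lam`-automatic if its `lam`-kernel is finite. -/
def IsAutomatic (lam : ℕ) (f : ℕ → ℂ) : Prop :=
  {g : ℕ → ℂ | ∃ k r : ℕ, r < lam ^ k ∧ g = fun n => f (lam ^ k * n + r)}.Finite

/-- A sequence is multiplicative if `f 1 = 1` and `f (m*n) = f m * f n` for coprime `m n ≥ 1`. -/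
def IsMultiplicativeSeq (f : ℕ → ℂ) : Prop :=
  f 1 = 1 ∧ ∀ m n : ℕ, 1 ≤ m → 1 ≤ n → Nat.Coprime m n → f (m * n) = f m * f n

/-- Eventually periodic sequence. -/
def EventuallyPeriodicSeq (f : ℕ → ℂ) : Prop :=
  ∃ d : ℕ, 1 ≤ d ∧ ∃ n₀ : ℕ, ∀ n ≥ n₀, f (n + d) = f n

/-- A Dirichlet character of modulus `k`: `k`-periodic, completely multiplicative,
and vanishing exactly at arguments not coprime to `k`. -/
def IsDirichletCharacterSeq (k : ℕ) (χ : ℕ → ℂ) : Prop :=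
  (∀ n : ℕ, χ (n + k) = χ n) ∧ (∀ m n : ℕ, χ (m * n) = χ m * χ n) ∧
    (∀ n : ℕ, χ n = 0 ↔ 1 < Nat.gcd n k)

namespace IsDirichletCharacterSeq

variable {k : ℕ} {χ : ℕ → ℂ}

theorem modEq (hχ : IsDirichletCharacterSeq k χ) {x y : ℕ} (hxy : x ≡ y [MOD k]) :
    χ x = χ y := by
  have hper : Function.Periodic χ k := hχ.1
  rw [← hper.map_mod_nat x, ← hper.map_mod_nat y, hxy]

theorem ne_zero (hχ : IsDirichletCharacterSeq k χ) {x : ℕ} (hx : x.Coprime k) : χ x ≠ 0 := by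
  rw [Ne, hχ.2.2, hx.gcd_eq_one]
  exact lt_irrefl 1

theorem map_one (hχ : IsDirichletCharacterSeq k χ) : χ 1 = 1 := by
  have h := hχ.2.1 1 1
  rw [mul_one] at h
  exact (mul_eq_left₀ (hχ.ne_zero (Nat.coprime_one_left k))).mp h.symm

theorem map_pow (hχ : IsDirichletCharacterSeq k χ) (x t : ℕ) : χ (x ^ t) = χ x ^ t := by
  induction t with
  | zero => exact hχ.map_one
  | succ t ih => rw [pow_succ, pow_succ, hχ.2.1, ih]

end IsDirichletCharacterSeq

theorem IsAutomatic.exists_lt_kernel_eq {lam : ℕ} {a : ℕ → ℂ} (haut : IsAutomatic lam a)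
    {e r : ℕ → ℕ} (hr : ∀ i, r i < lam ^ e i) :
    ∃ i j, i < j ∧ ∀ n, a (lam ^ e i * n + r i) = a (lam ^ e j * n + r j) := by
  obtain ⟨i, j, hij, hfun⟩ := haut.exists_lt_map_eq_of_forall_mem
    (f := fun i n => a (lam ^ e i * n + r i)) (by exact fun i => ⟨e i, r i, hr i, rfl⟩)
  exact ⟨i, j, hij, congrFun hfun⟩

theorem Nat.exists_mul_add_modEq {N R : ℕ} (hN : N.Coprime R) (hR : R ≠ 0) (r s : ℕ) :
    ∃ n, N * n + r ≡ s [MOD R] := by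
  obtain ⟨n, -, hn⟩ := Nat.exists_mul_mod_eq_of_coprime (s + (R - 1) * r) hN hR
  refine ⟨n, ?_⟩
  calc N * n + r ≡ s + (R - 1) * r + r [MOD R] := Nat.ModEq.add_right r hn
    _ = s + R * r := by
      rw [add_assoc, ← Nat.succ_mul, Nat.succ_eq_add_one, Nat.sub_add_cancel (by omega)]
    _ ≡ s [MOD R] := Nat.add_mul_mod_self_left s R r

theorem Nat.exists_eq_mul_modEq_of_add_mul_modEq {p Q X t v : ℕ} (hp : p ≠ 0)
    (h : X + p * t ≡ p * v [MOD p * Q]) : ∃ B, X = p * B ∧ B + t ≡ v [MOD Q] := by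
  have hdvd : p ∣ X + p * t := (h.dvd_iff (dvd_mul_right p Q)).mpr (dvd_mul_right p v)
  obtain ⟨B, rfl⟩ := (Nat.dvd_add_left (dvd_mul_right p t)).mp hdvd
  exact ⟨B, rfl, Nat.ModEq.mul_left_cancel' hp (by rwa [mul_add])⟩

theorem exists_mul_add_eq_pow_mul {L M' q α k K v : ℕ} (hq : q ≠ 0) (hL : L.Coprime q)
    (hM' : M'.Coprime q) :
    ∃ n B, M' ∣ n ∧ L * n + q ^ k = q ^ K * B ∧ B ≡ v [MOD q ^ α] := by
  have hcop : (L * M').Coprime (q ^ K * q ^ α) := by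
    rw [← pow_add]
    exact (hL.mul_left hM').pow_right _
  obtain ⟨n, hn⟩ := Nat.exists_mul_add_modEq hcop (by positivity) (q ^ k) (q ^ K * v)
  obtain ⟨B, hB, hBv⟩ := Nat.exists_eq_mul_modEq_of_add_mul_modEq (X := L * M' * n + q ^ k)
    (Q := q ^ α) (t := 0) (v := v) (pow_ne_zero K hq)
    (by rwa [mul_zero, add_zero])
  exact ⟨M' * n, B, dvd_mul_right M' n, by rw [← mul_assoc, hB], by rwa [add_zero] at hBv⟩

theorem exists_mul_add_pow_eq_pow_mul {L D q α k Δ K n B : ℕ} (hq : q ≠ 0) (hK : k + α ≤ K)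
    (hX : L * n + q ^ k = q ^ K * B) :
    ∃ C, L * D * n + q ^ (k + Δ) = q ^ k * C ∧ C + D ≡ q ^ Δ [MOD q ^ α] := by
  obtain ⟨j, rfl⟩ := Nat.exists_eq_add_of_le hK
  apply Nat.exists_eq_mul_modEq_of_add_mul_modEq (pow_ne_zero k hq)
  have hsum : L * D * n + q ^ (k + Δ) + q ^ k * D =
      q ^ k * q ^ Δ + q ^ k * q ^ α * (D * q ^ j * B) :=
    calc _ = D * (L * n + q ^ k) + q ^ (k + Δ) := by ring
      _ = _ := by rw [hX]; ring
  rw [hsum]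
  exact Nat.add_mul_mod_self_left _ _ _

theorem apply_pow_mul_eq {a χq χ' : ℕ → ℂ} {q M' : ℕ} (hq : q.Prime) (hqM' : q.Coprime M')
    (ha : IsMultiplicativeSeq a) (hχ' : IsDirichletCharacterSeq M' χ')
    (haχ : ∀ n, n.Coprime q → n.Coprime M' → a n = χq n * χ' n)
    {K B j : ℕ} (hBq : B.Coprime q) (hj : q ^ K * B ≡ q ^ j [MOD M']) :
    a (q ^ K * B) = χq B * (a (q ^ K) / χ' q ^ K) * χ' q ^ j := by
  have hB0 : B ≠ 0 := by
    rintro rfl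
    exact hq.ne_one ((Nat.coprime_zero_left q).mp hBq)
  have hBM' : B.Coprime M' :=
    Nat.Coprime.coprime_mul_left (hj.gcd_eq.trans (hqM'.pow_left j))
  have hχ'B : χ' q ^ K * χ' B = χ' q ^ j := by
    rw [← hχ'.map_pow, ← hχ'.2.1, hχ'.modEq hj, hχ'.map_pow]
  have hE : χ' q ^ K ≠ 0 := pow_ne_zero K (hχ'.ne_zero hqM')
  rw [ha.2 _ _ (Nat.one_le_iff_ne_zero.mpr (pow_ne_zero K hq.ne_zero))
    (Nat.one_le_iff_ne_zero.mpr hB0) (hBq.symm.pow_left K), haχ B hBq hBM', ← hχ'B]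
  field_simp

theorem exists_modEq_and_eq_of_kernel_eq {L D q α M' k Δ K v : ℕ} {a χq χ' : ℕ → ℂ}
    (hq : q.Prime) (hα : α ≠ 0) (hΔ : Δ ≠ 0) (hL : L.Coprime q) (hD : D.Coprime q)
    (hqM' : q.Coprime M') (ha : IsMultiplicativeSeq a) (hχq : IsDirichletCharacterSeq (q ^ α) χq)
    (hχ' : IsDirichletCharacterSeq M' χ')
    (haχ : ∀ n, n.Coprime q → n.Coprime M' → a n = χq n * χ' n)
    (hker : ∀ n, a (L * n + q ^ k) = a (L * D * n + q ^ (k + Δ))) (hK : k + α ≤ K)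
    (hv : ¬ q ∣ v) :
    ∃ C, C + D ≡ q ^ Δ [MOD q ^ α] ∧
      χq v * (a (q ^ K) / χ' q ^ K) = χq C * (a (q ^ k) / χ' q ^ k) * χ' q ^ Δ := by
  have hqα : q ∣ q ^ α := dvd_pow_self q hα
  obtain ⟨n, B, hn, hX, hBv⟩ :=
    exists_mul_add_eq_pow_mul (α := α) (k := k) (K := K) (v := v) hq.ne_zero hL hqM'.symm
  obtain ⟨C, hY, hCD⟩ := exists_mul_add_pow_eq_pow_mul (D := D) (Δ := Δ) hq.ne_zero hK hX
  have hBq : B.Coprime q :=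
    ((Nat.Prime.coprime_iff_not_dvd hq).mpr ((hBv.dvd_iff hqα).not.mpr hv)).symm
  have hCq : C.Coprime q := by
    refine ((Nat.Prime.coprime_iff_not_dvd hq).mpr fun hqC => ?_).symm
    have hsum : q ∣ C + D := (hCD.dvd_iff hqα).mpr (dvd_pow_self q hΔ)
    exact (Nat.Prime.coprime_iff_not_dvd hq).mp hD.symm ((Nat.dvd_add_right hqC).mp hsum)
  have hM'n : ∀ L r, L * n + r ≡ r [MOD M'] := fun L r => by
    simpa using (Nat.modEq_zero_iff_dvd.mpr (hn.mul_left L)).add_right r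
  have hXM' : q ^ K * B ≡ q ^ k [MOD M'] := hX ▸ hM'n _ _
  have hYM' : q ^ k * C ≡ q ^ (k + Δ) [MOD M'] := hY ▸ hM'n _ _
  have hkernel := hker n
  rw [hX, hY, apply_pow_mul_eq hq hqM' ha hχ' haχ hBq hXM',
    apply_pow_mul_eq hq hqM' ha hχ' haχ hCq hYM', hχq.modEq hBv] at hkernel
  refine ⟨C, hCD, mul_right_cancel₀ (pow_ne_zero k (hχ'.ne_zero hqM')) ?_⟩
  linear_combination hkernel

theorem exists_const_of_isAutomatic {lam q α M' : ℕ} {a χq χ' : ℕ → ℂ} (hlam : 2 ≤ lam)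
    (hq : q.Prime) (hα : α ≠ 0) (hqlam : q.Coprime lam) (hqM' : q.Coprime M')
    (haut : IsAutomatic lam a) (ha : IsMultiplicativeSeq a)
    (hχq : IsDirichletCharacterSeq (q ^ α) χq) (hχ' : IsDirichletCharacterSeq M' χ')
    (haχ : ∀ n, n.Coprime q → n.Coprime M' → a n = χq n * χ' n) :
    ∃ K₀ c, ∀ K ≥ K₀, ∀ v, ¬ q ∣ v → χq v * (a (q ^ K) / χ' q ^ K) = c := by
  obtain ⟨k, k', hkk', hker⟩ := haut.exists_lt_kernel_eq (e := fun i => q ^ i)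
    (r := fun i => q ^ i) fun i => Nat.lt_pow_self hlam
  obtain ⟨Δ, rfl⟩ := Nat.exists_eq_add_of_le hkk'.le
  obtain ⟨δ, hδ⟩ := Nat.exists_eq_add_of_le (Nat.pow_le_pow_right hq.pos hkk'.le)
  have hker' : ∀ n, a (lam ^ q ^ k * n + q ^ k) = a (lam ^ q ^ k * lam ^ δ * n + q ^ (k + Δ)) :=
    fun n => by rw [← pow_add, ← hδ]; exact hker n
  have key {K v : ℕ} (hK : k + α ≤ K) (hv : ¬ q ∣ v) :=
    exists_modEq_and_eq_of_kernel_eq hq hα (by omega) (hqlam.symm.pow_left _)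
      (hqlam.symm.pow_left _) hqM' ha hχq hχ' haχ hker' hK hv
  obtain ⟨C₀, hC₀, -⟩ := key (le_refl (k + α)) hq.not_dvd_one
  refine ⟨k + α, χq C₀ * (a (q ^ k) / χ' q ^ k) * χ' q ^ Δ, fun K hK v hv => ?_⟩
  obtain ⟨C, hC, hw⟩ := key hK hv
  rw [hw, hχq.modEq (Nat.ModEq.add_right_cancel' _ (hC.trans hC₀.symm))]

theorem not_dvd_div_pow_padicValNat {p n : ℕ} (hp : p.Prime) (hn : n ≠ 0) :
    ¬ p ∣ n / p ^ padicValNat p n := by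
  simpa only [Nat.factorization_def n hp] using Nat.not_dvd_ordCompl hp hn

theorem padicValNat_add_pow_of_lt {p n N : ℕ} [Fact p.Prime] (hn : n ≠ 0)
    (hN : padicValNat p n < N) : padicValNat p (n + p ^ N) = padicValNat p n := by
  have hnN : n + p ^ N ≠ 0 := by omega
  apply le_antisymm
  · by_contra! hlt
    have hdvd : p ^ (padicValNat p n + 1) ∣ n + p ^ N := (padicValNat_dvd_iff_le hnN).mpr hlt
    exact pow_succ_padicValNat_not_dvd hn ((Nat.dvd_add_left (pow_dvd_pow p hN)).mp hdvd)
  · exact (padicValNat_dvd_iff_le hnN).mp (dvd_add pow_padicValNat_dvd (pow_dvd_pow p hN.le))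

theorem apply_ordCompl_add_pow_eq_of_forall_ge {q α K₀ : ℕ} (hq : q.Prime) {ψ w : ℕ → ℂ} {c : ℂ}
    (hψ : Function.Periodic ψ (q ^ α)) (hc : ∀ K ≥ K₀, ∀ v, ¬ q ∣ v → ψ v * w K = c)
    {n : ℕ} (hn : n ≠ 0) :
    ψ ((n + q ^ (K₀ + α)) / q ^ padicValNat q (n + q ^ (K₀ + α))) *
        w (padicValNat q (n + q ^ (K₀ + α))) =
      ψ (n / q ^ padicValNat q n) * w (padicValNat q n) := by
  have := Fact.mk hq
  have hnd : n + q ^ (K₀ + α) ≠ 0 := by omega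
  by_cases hj : K₀ ≤ padicValNat q n
  · have hK₀ : K₀ ≤ padicValNat q (n + q ^ (K₀ + α)) :=
      (padicValNat_dvd_iff_le hnd).mp (dvd_add ((pow_dvd_pow q hj).trans pow_padicValNat_dvd)
        (pow_dvd_pow q (Nat.le_add_right K₀ α)))
    rw [hc _ hK₀ _ (not_dvd_div_pow_padicValNat hq hnd),
      hc _ hj _ (not_dvd_div_pow_padicValNat hq hn)]
  · push Not at hj
    have hexp : K₀ + α - padicValNat q n = (K₀ - padicValNat q n) + α := by omega
    have hper := hψ.nat_mul (q ^ (K₀ - padicValNat q n))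
    rw [Nat.cast_id, ← pow_add, ← hexp] at hper
    rw [padicValNat_add_pow_of_lt hn (by omega), Nat.add_div_of_dvd_right pow_padicValNat_dvd,
      Nat.pow_div (by omega) hq.pos, hper]

theorem stmt_13_general (lam h : ℕ) (hlam : 2 ≤ lam) (hh : 1 ≤ h)
    (hcop : Nat.Coprime h lam)
    (a : ℕ → ℂ) (haut : IsAutomatic lam a) (ha : IsMultiplicativeSeq a)
    (χ : ℕ → ℂ)
    (haχ : ∀ n : ℕ, 1 ≤ n → Nat.Coprime n (h * lam) → a n = χ n)
    (q : ℕ) (hq : q.Prime) (hqh : q ∣ h)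
    (α : ℕ) (hα : α = padicValNat q (h * lam))
    (χq : ℕ → ℂ) (hχq : IsDirichletCharacterSeq (q ^ α) χq)
    (χ' : ℕ → ℂ) (hχ' : IsDirichletCharacterSeq ((h * lam) / q ^ α) χ')
    (hsplit : ∀ n : ℕ, χ n = χq n * χ' n)
    (m : ℕ) (hm1 : m ≡ 1 [MOD q ^ α]) (hm2 : m ≡ q [MOD (h * lam) / q ^ α]) :
    ∃ d : ℕ, 1 ≤ d ∧ ∀ n : ℕ, 1 ≤ n →
      χq ((n + d) / q ^ padicValNat q (n + d)) * a (q ^ padicValNat q (n + d)) /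
          (χ m) ^ padicValNat q (n + d) =
        χq (n / q ^ padicValNat q n) * a (q ^ padicValNat q n) /
          (χ m) ^ padicValNat q n := by
  have := Fact.mk hq
  have hM0 : h * lam ≠ 0 := Nat.mul_ne_zero (by omega) (by omega)
  have hQM : q ^ α ∣ h * lam := hα ▸ pow_padicValNat_dvd
  have hqM' : q.Coprime (h * lam / q ^ α) := by
    simpa only [Nat.factorization_def _ hq, ← hα] using Nat.coprime_ordCompl hq hM0
  have hα0 : α ≠ 0 :=
    Nat.one_le_iff_ne_zero.mp (hα ▸ one_le_padicValNat_of_dvd hM0 (hqh.mul_right lam))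
  have haχ' : ∀ n, n.Coprime q → n.Coprime (h * lam / q ^ α) → a n = χq n * χ' n := by
    intro n hnq hnM'
    have hn0 : n ≠ 0 := by
      rintro rfl
      exact hq.ne_one ((Nat.coprime_zero_left q).mp hnq)
    have hnM : n.Coprime (h * lam) := by
      rw [← Nat.mul_div_cancel' hQM]
      exact (hnq.pow_right α).mul_right hnM'
    rw [haχ n (Nat.one_le_iff_ne_zero.mpr hn0) hnM, hsplit]
  have hχm : χ m = χ' q := by
    rw [hsplit, hχq.modEq hm1, hχq.map_one, one_mul, hχ'.modEq hm2]
  obtain ⟨K₀, c, hc⟩ := exists_const_of_isAutomatic hlam hq hα0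
    (Nat.Coprime.coprime_dvd_left hqh hcop) hqM' haut ha hχq hχ' haχ'
  refine ⟨q ^ (K₀ + α), Nat.one_le_iff_ne_zero.mpr (pow_ne_zero _ hq.ne_zero), fun n hn => ?_⟩
  simpa only [hχm, mul_div_assoc] using apply_ordCompl_add_pow_eq_of_forall_ge
    (w := fun K => a (q ^ K) / χ' q ^ K) hq hχq.1 hc (Nat.one_le_iff_ne_zero.mp hn)

theorem stmt_13 (lam h : ℕ) (hlam : 2 ≤ lam) (hh : 1 ≤ h)
    (hcop : Nat.Coprime h lam)
    (a : ℕ → ℂ) (haut : IsAutomatic lam a) (ha : IsMultiplicativeSeq a)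
    (χ : ℕ → ℂ) (hχ : IsDirichletCharacterSeq (h * lam) χ)
    (haχ : ∀ n : ℕ, 1 ≤ n → Nat.Coprime n (h * lam) → a n = χ n)
    (q : ℕ) (hq : q.Prime) (hqh : q ∣ h)
    (α : ℕ) (hα : α = padicValNat q (h * lam))
    (χq : ℕ → ℂ) (hχq : IsDirichletCharacterSeq (q ^ α) χq)
    (χ' : ℕ → ℂ) (hχ' : IsDirichletCharacterSeq ((h * lam) / q ^ α) χ')
    (hsplit : ∀ n : ℕ, χ n = χq n * χ' n)
    (m : ℕ) (hm1 : m ≡ 1 [MOD q ^ α]) (hm2 : m ≡ q [MOD (h * lam) / q ^ α]) :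
    ∃ d : ℕ, 1 ≤ d ∧ ∀ n : ℕ, 1 ≤ n →
      χq ((n + d) / q ^ padicValNat q (n + d)) * a (q ^ padicValNat q (n + d)) /
          (χ m) ^ padicValNat q (n + d) =
        χq (n / q ^ padicValNat q n) * a (q ^ padicValNat q n) /
          (χ m) ^ padicValNat q n :=
  stmt_13_general lam h hlam hh hcop a haut ha χ haχ q hq hqh α hα χq hχq χ' hχ' hsplit m hm1 hm2
end

section
/- Let p be a prime, α ≥ 1, and set λ = p^α. Let h ≥ 1 be coprime to λ, let a : ℕ → ℂ be λ-automatic and multiplicative, and suppose there is a Dirichlet character χ of modulus hλ such that a(n) = χ(n) for all n ≥ 1 coprime to hλ. Then there exist f₁ : ℕ → ℂ eventually periodic with f₁(0) = 1, and f₂ : ℕ → ℂ multiplicative and periodic (there exists d ≥ 1 with f₂(n+d) = f₂(n) for all n ≥ 1), such that a(n) = f₁(ν_p(n)) · f₂(n / p^{ν_p(n)}) for all n ≥ 1. -/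
/-!
Let `ψ` be the Dirichlet character modulo `M = h * lam` that agrees with `a` on units, and `φ` its
primitive character. The heart of the proof is local: for every prime `q ∣ h`,
`a (q ^ (e + 1)) = φ q * a (q ^ e)` for all large `e`. Finiteness of the `lam`-kernel gives `i < j`
with `a (lam ^ i * n + 1) = a (lam ^ j * n + 1)` for all `n`. Choosing `n` by the Chinese remainder
theorem so that `lam ^ i * n + 1 = q ^ e * x` with `x` in a prescribed unit class, the partner
`lam ^ j * n + 1` has fixed `q`-valuation and lies in a fixed class, so `a (q ^ e) * ψ x` is a
constant `κ`. If `κ = 0`, then `a (q ^ e)` vanishes for large `e`; otherwise varying `x` shows that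
`ψ` factors through `M / q ^ v_q(h)`, so its conductor divides `M / q ^ v_q(h)`, and comparing `e`
with `e + 1` gives the recurrence.

At primes not dividing `M` the recurrence holds for all `e`. Hence, with `L = ∏ q ^ B_q` over the
primes of `h` and `g = gcd n L`, one gets `a n = a g * φ (n / g)` whenever `p ∤ n`, and this is
invariant under `n ↦ n + L * M`. The `p`-part `k ↦ a (p ^ k)` is eventually periodic because the
kernel sequences `n ↦ a (lam ^ k * n)` cannot all be distinct.
-/

theorem IsDirichletCharacterSeq.exists_dirichletCharacter {k : ℕ} [NeZero k] {χ : ℕ → ℂ}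
    (hχ : IsDirichletCharacterSeq k χ) : ∃ ψ : DirichletCharacter ℂ k, ∀ n : ℕ, ψ n = χ n := by
  obtain ⟨hper, hmul, hzero⟩ := hχ
  have hmod : ∀ n, χ (n % k) = χ n := Function.Periodic.map_mod_nat hper
  have hone : χ 1 = 1 := by
    have h1 : χ 1 ≠ 0 := fun h => by simpa using (hzero 1).mp h
    simpa [h1] using hmul 1 1
  let ψ : DirichletCharacter ℂ k :=
    { toFun := fun x => χ x.val
      map_one' := by simp only [ZMod.val_one_eq_one_mod, hmod, hone]
      map_mul' := fun x y => by simp only [ZMod.val_mul, hmod, hmul]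
      map_nonunit' := fun x hx => by
        refine (hzero _).mpr (lt_of_le_of_ne ?_ (Ne.symm ?_))
        · exact Nat.pos_of_ne_zero (Nat.gcd_ne_zero_right (NeZero.ne k))
        · rwa [← ZMod.natCast_zmod_val x, ZMod.isUnit_iff_coprime] at hx }
  exact ⟨ψ, fun n => by simp [ψ, ZMod.val_natCast, hmod]⟩

namespace DirichletCharacter

variable {R : Type*} [CommMonoidWithZero R] {n : ℕ}

theorem factorsThrough_of_forall_modEq_one [NeZero n] (ψ : DirichletCharacter R n) {d : ℕ}
    (hd : d ∣ n) (h : ∀ w : ℕ, w.Coprime n → w ≡ 1 [MOD d] → ψ w = 1) :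
    ψ.FactorsThrough d := by
  refine (factorsThrough_iff_ker_unitsMap hd).mpr fun u hu => ?_
  rw [MonoidHom.mem_ker, Units.ext_iff, ZMod.unitsMap_val, Units.val_one,
    ← ZMod.natCast_zmod_val (u : ZMod n), ZMod.cast_natCast hd, ← Nat.cast_one,
    ZMod.natCast_eq_natCast_iff] at hu
  rw [MonoidHom.mem_ker, Units.ext_iff, MulChar.coe_toUnitHom, Units.val_one,
    ← ZMod.natCast_zmod_val (u : ZMod n)]
  exact h _ (ZMod.val_coe_unit_coprime u) hu

theorem primitiveCharacter_apply_natCast {ψ : DirichletCharacter R n} {m : ℕ}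
    (hm : m.Coprime n) : ψ.primitiveCharacter m = ψ m := by
  exact_mod_cast ψ.primitiveCharacter_apply_of_isCoprime (Nat.isCoprime_iff_coprime.mpr hm)

theorem apply_natCast_ne_zero [Nontrivial R] (ψ : DirichletCharacter R n) {m : ℕ}
    (hm : m.Coprime n) : ψ m ≠ 0 := by
  exact_mod_cast (ψ.apply_ne_zero_iff m).mpr (Nat.isCoprime_iff_coprime.mpr hm)

theorem apply_eq_of_modEq {ψ : DirichletCharacter R n} {m m' d : ℕ} (hd : n ∣ d)
    (h : m ≡ m' [MOD d]) : ψ m = ψ m' := by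
  rw [(ZMod.natCast_eq_natCast_iff _ _ _).mpr (h.of_dvd hd)]

end DirichletCharacter

theorem Nat.factorization_gcd_eq_right_of_dvd_div {n L r : ℕ} (hn : n ≠ 0) (hL : L ≠ 0)
    (hr : r.Prime) (h : r ∣ n / n.gcd L) : (n.gcd L).factorization r = L.factorization r := by
  have hdvd := Nat.gcd_dvd_left n L
  have hdiv : n / n.gcd L ≠ 0 :=
    (Nat.div_ne_zero_iff_of_dvd hdvd).mpr ⟨hn, Nat.gcd_ne_zero_right hL⟩
  have h1 := (hr.dvd_iff_one_le_factorization hdiv).mp h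
  rw [Nat.factorization_div hdvd, Finsupp.tsub_apply] at h1
  rw [Nat.factorization_gcd hn hL, Finsupp.inf_apply] at h1 ⊢
  omega

namespace IsMultiplicativeSeq

variable {a : ℕ → ℂ}

theorem map_mul_of_coprime (ha : IsMultiplicativeSeq a) {m n : ℕ} (hmn : m.Coprime n) :
    a (m * n) = a m * a n := by
  rcases Nat.eq_zero_or_pos m with rfl | hm
  · obtain rfl := (Nat.coprime_zero_left n).mp hmn
    simp [ha.1]
  rcases Nat.eq_zero_or_pos n with rfl | hn
  · obtain rfl := (Nat.coprime_zero_right m).mp hmn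
    simp [ha.1]
  exact ha.2 m n hm hn hmn

theorem ite_dvd (ha : IsMultiplicativeSeq a) {p : ℕ} (hp : p.Prime) :
    IsMultiplicativeSeq fun n => if p ∣ n then 0 else a n := by
  refine ⟨by simp [hp.not_dvd_one, ha.1], fun m n hm hn hmn => ?_⟩
  by_cases hpm : p ∣ m
  · simp [hpm, dvd_mul_of_dvd_left hpm]
  by_cases hpn : p ∣ n
  · simp [hpn, dvd_mul_of_dvd_right hpn]
  simp [hpm, hpn, hp.dvd_mul, ha.2 m n hm hn hmn]

theorem apply_eq_ordProj_mul_ordCompl (ha : IsMultiplicativeSeq a) {r n : ℕ} (hr : r.Prime)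
    (hn : n ≠ 0) : a n = a (r ^ n.factorization r) * a (n / r ^ n.factorization r) := by
  conv_lhs => rw [← Nat.ordProj_mul_ordCompl_eq_self n r]
  exact ha.map_mul_of_coprime ((Nat.coprime_ordCompl hr hn).pow_left _)

theorem apply_mul_prime_eq (ha : IsMultiplicativeSeq a) {r x : ℕ} (hr : r.Prime) (hx : x ≠ 0)
    {z : ℂ} (hz : a (r ^ (x.factorization r + 1)) = z * a (r ^ x.factorization r)) :
    a (x * r) = z * a x := by
  have hcop := (Nat.coprime_ordCompl hr hx).pow_left (x.factorization r + 1)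
  have hxr : x * r = r ^ (x.factorization r + 1) * (x / r ^ x.factorization r) := by
    conv_lhs => rw [← Nat.ordProj_mul_ordCompl_eq_self x r]
    ring
  rw [hxr, ha.map_mul_of_coprime hcop, hz, mul_assoc, ← ha.apply_eq_ordProj_mul_ordCompl hr hx]

theorem apply_mul_eq_of_geometric (ha : IsMultiplicativeSeq a) {c : ℕ}
    (φ : DirichletCharacter ℂ c) {w : ℕ} (hw : w ≠ 0) :
    ∀ {x : ℕ}, x ≠ 0 → (∀ r, r.Prime → r ∣ w → ∀ j, x.factorization r ≤ j →
      a (r ^ (j + 1)) = φ r * a (r ^ j)) → a (x * w) = a x * φ w := by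
  induction w using induction_on_primes with
  | zero => exact absurd rfl hw
  | one => simp
  | prime_mul r w hr ih =>
    intro x hx hgeom
    have hx' : x * r ≠ 0 := mul_ne_zero hx hr.ne_zero
    have hxr : a (x * r) = φ r * a x :=
      ha.apply_mul_prime_eq hr hx (hgeom r hr (dvd_mul_right r w) _ le_rfl)
    have ihx := ih (right_ne_zero_of_mul hw) hx' fun s hs hsw j hj =>
      hgeom s hs (dvd_mul_of_dvd_right hsw r) j <|
        (Nat.factorization_le_iff_dvd hx hx' |>.mpr (dvd_mul_right x r) s).trans hj
    rw [← mul_assoc, ihx, hxr, Nat.cast_mul, map_mul]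
    ring

theorem apply_add_mul_eq_of_geometric (ha : IsMultiplicativeSeq a) {c : ℕ}
    (φ : DirichletCharacter ℂ c) {p L K : ℕ} (hL : L ≠ 0) (hcK : c ∣ K) (hpK : p ∣ K)
    (hgeom : ∀ r, r.Prime → r ≠ p → ∀ j, L.factorization r ≤ j →
      a (r ^ (j + 1)) = φ r * a (r ^ j))
    {n : ℕ} (hn : n ≠ 0) (hpn : ¬ p ∣ n) : a (n + L * K) = a n := by
  set g := n.gcd L
  have hg : g ≠ 0 := Nat.gcd_ne_zero_right hL
  -- `g` is also `gcd (n + L * K) L`, and beyond `g` every prime of `m / g` is geometric.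
  have key : ∀ m, m ≠ 0 → ¬ p ∣ m → m.gcd L = g → a m = a g * φ (m / g) := by
    intro m hm hpm hmg
    have hgm : g ∣ m := hmg ▸ Nat.gcd_dvd_left m L
    conv_lhs => rw [← Nat.mul_div_cancel' hgm]
    refine ha.apply_mul_eq_of_geometric φ ((Nat.div_ne_zero_iff_of_dvd hgm).mpr ⟨hm, hg⟩) hg
      fun r hr hrm j hj => hgeom r hr ?_ j ?_
    · rintro rfl
      exact hpm (hrm.trans (Nat.div_dvd_of_dvd hgm))
    · rw [← hmg] at hrm hj
      rwa [Nat.factorization_gcd_eq_right_of_dvd_div hm hL hr hrm] at hj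
  have hpnK : ¬ p ∣ n + L * K := fun h => hpn ((Nat.dvd_add_left (hpK.mul_left L)).mp h)
  rw [key _ (by positivity) hpnK (Nat.gcd_add_mul_left_left L n K), key n hn hpn rfl,
    Nat.add_div_of_dvd_right (Nat.gcd_dvd_left n L),
    Nat.mul_div_right_comm (Nat.gcd_dvd_right n L)]
  congr 1
  exact φ.apply_eq_of_modEq hcK (Nat.add_mul_mod_self_right _ _ _)

theorem exists_decomposition (ha : IsMultiplicativeSeq a) {p : ℕ} (hp : p.Prime)
    (hpow : EventuallyPeriodicSeq fun k => a (p ^ k)) {D : ℕ} (hD : 1 ≤ D) (hpD : p ∣ D)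
    (hper : ∀ n, n ≠ 0 → ¬ p ∣ n → a (n + D) = a n) :
    ∃ f₁ f₂ : ℕ → ℂ,
      EventuallyPeriodicSeq f₁ ∧ f₁ 0 = 1 ∧
      IsMultiplicativeSeq f₂ ∧
      (∃ d : ℕ, 1 ≤ d ∧ ∀ n : ℕ, 1 ≤ n → f₂ (n + d) = f₂ n) ∧
      ∀ n : ℕ, 1 ≤ n →
        a n = f₁ (padicValNat p n) * f₂ (n / p ^ padicValNat p n) := by
  refine ⟨fun k => a (p ^ k), fun n => if p ∣ n then 0 else a n, hpow, by simpa using ha.1,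
    ha.ite_dvd hp, ⟨D, hD, fun n hn => ?_⟩, fun n hn => ?_⟩
  · by_cases hpn : p ∣ n
    · simp [hpn, (Nat.dvd_add_right hpn).mpr hpD]
    · simp [hpn, hper n (by omega) hpn, (Nat.dvd_add_left hpD).not.mpr hpn]
  · have hn0 : n ≠ 0 := by omega
    rw [← Nat.factorization_def n hp]
    simp only [Nat.not_dvd_ordCompl hp hn0, if_false]
    exact ha.apply_eq_ordProj_mul_ordCompl hp hn0

end IsMultiplicativeSeq

namespace IsAutomatic

variable {lam : ℕ} {a : ℕ → ℂ}

theorem exists_pow_mul_eq (haut : IsAutomatic lam a) (hlam : lam ≠ 0) :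
    ∃ i j, i < j ∧ ∀ n, a (lam ^ i * n) = a (lam ^ j * n) := by
  obtain ⟨i, j, hij, heq⟩ := Set.Finite.exists_lt_map_eq_of_forall_mem
    (f := fun k n => a (lam ^ k * n)) (fun k => by exact ⟨k, 0, by positivity, rfl⟩) haut
  exact ⟨i, j, hij, congrFun heq⟩

theorem exists_pow_mul_add_one_eq (haut : IsAutomatic lam a) (hlam : 2 ≤ lam) :
    ∃ i j, i < j ∧ ∀ n, a (lam ^ i * n + 1) = a (lam ^ j * n + 1) := by
  obtain ⟨i, j, hij, heq⟩ := Set.Finite.exists_lt_map_eq_of_forall_mem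
    (f := fun k n => a (lam ^ (k + 1) * n + 1))
    (fun k => by exact ⟨k + 1, 1, Nat.one_lt_pow k.succ_ne_zero hlam, rfl⟩) haut
  exact ⟨i + 1, j + 1, by omega, congrFun heq⟩

theorem eventuallyPeriodicSeq_pow {p α : ℕ} (haut : IsAutomatic (p ^ α) a) (hp : p ≠ 0)
    (hα : 1 ≤ α) : EventuallyPeriodicSeq fun k => a (p ^ k) := by
  obtain ⟨i, j, hij, heq⟩ := haut.exists_pow_mul_eq (pow_ne_zero α hp)
  have hαij : α * (j - i) + α * i = α * j := by rw [← mul_add, Nat.sub_add_cancel hij.le]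
  refine ⟨α * (j - i), Nat.mul_le_mul hα (Nat.sub_pos_of_lt hij), α * i, fun k hk => ?_⟩
  have hk : p ^ k = (p ^ α) ^ i * p ^ (k - α * i) := by
    rw [← pow_mul, ← pow_add]; congr 1; omega
  have hkd : p ^ (k + α * (j - i)) = (p ^ α) ^ j * p ^ (k - α * i) := by
    rw [← pow_mul, ← pow_add]; congr 1; omega
  simp only [hk, hkd, heq]

end IsAutomatic

section

variable {a : ℕ → ℂ} {lam i j q γ Co B M : ℕ} {κ : ℂ}

theorem exists_pump_witness (hpump : ∀ n, a (lam ^ i * n + 1) = a (lam ^ j * n + 1))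
    (hij : i < j) (hq : q.Prime) (hqlam : q.Coprime lam) (hqCo : q.Coprime Co) (hγ : γ ≠ 0)
    (e : ℕ) {w : ℕ} (hw : ¬ q ∣ w) :
    ∃ x' y, x'.Coprime (q ^ γ * Co) ∧ x' ≡ w [MOD q ^ γ] ∧ q ^ e * x' ≡ 1 [MOD Co] ∧
      y ≡ 1 [MOD Co] ∧ q ^ e ∣ y + (lam ^ (j - i) - 1) ∧ a (q ^ e * x') = a y := by
  have hcop : (lam ^ i * Co).Coprime (q ^ (e + γ)) :=
    Nat.Coprime.mul_left (Nat.Coprime.pow _ _ hqlam.symm) (hqCo.symm.pow_right _)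
  obtain ⟨x, hx1, hx2⟩ := Nat.chineseRemainder hcop 1 (q ^ e * w)
  have hx0 : x ≠ 0 := by
    rintro rfl
    have h := Nat.modEq_zero_iff_dvd.mp hx2.symm
    rw [pow_add] at h
    exact hw ((dvd_pow_self q hγ).trans (Nat.dvd_of_mul_dvd_mul_left (pow_pos hq.pos e) h))
  obtain ⟨k, hk⟩ := (Nat.modEq_iff_dvd' (Nat.one_le_iff_ne_zero.mpr hx0)).mp hx1.symm
  have hxk : x = lam ^ i * (Co * k) + 1 := by rw [← mul_assoc, ← hk]; omega
  obtain ⟨x', rfl⟩ : q ^ e ∣ x := (Nat.modEq_zero_iff_dvd.mp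
    ((hx2.of_dvd (pow_dvd_pow q (Nat.le_add_right e γ))).trans
      (Nat.modEq_zero_iff_dvd.mpr (dvd_mul_right _ _))))
  have hx'w : x' ≡ w [MOD q ^ γ] :=
    Nat.ModEq.mul_left_cancel' (pow_ne_zero e hq.ne_zero) (by rwa [← pow_add])
  have hxCo : q ^ e * x' ≡ 1 [MOD Co] := hx1.of_mul_left _
  have hqx' : ¬ q ∣ x' := fun h => hw (((hx'w.of_dvd (dvd_pow_self q hγ)).dvd_iff dvd_rfl).mp h)
  have ht : 1 ≤ lam ^ (j - i) :=
    Nat.one_le_pow _ _ (Nat.pos_of_ne_zero fun h => hq.one_lt.ne' (by simpa [h] using hqlam))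
  refine ⟨x', lam ^ j * (Co * k) + 1, ?_, hx'w, hxCo, ?_, ?_, by rw [hxk]; exact hpump _⟩
  · refine Nat.Coprime.mul_right (Nat.Coprime.pow_right _ ?_) ?_
    · exact Nat.coprime_comm.mp ((hq.coprime_iff_not_dvd).mpr hqx')
    · exact Nat.Coprime.coprime_mul_left (hxCo.gcd_eq.trans (Nat.gcd_one_left Co))
  · simpa using (Nat.modEq_zero_iff_dvd.mpr
      (dvd_mul_of_dvd_right (dvd_mul_right Co k) (lam ^ j))).add_right 1
  · refine ⟨lam ^ (j - i) * x', ?_⟩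
    obtain ⟨s, hs⟩ : ∃ s, lam ^ (j - i) = s + 1 := ⟨_, (Nat.sub_add_cancel ht).symm⟩
    have hj : lam ^ j = lam ^ (j - i) * lam ^ i := by rw [← pow_add, Nat.sub_add_cancel hij.le]
    rw [hj, hs, Nat.add_sub_cancel]
    calc (s + 1) * lam ^ i * (Co * k) + 1 + s = (s + 1) * (lam ^ i * (Co * k) + 1) := by ring
      _ = _ := by rw [← hxk]; ring

theorem IsMultiplicativeSeq.apply_eq_of_add_dvd (ha : IsMultiplicativeSeq a)
    (hunit : ∀ z z', z.Coprime (q ^ γ * Co) → z ≡ z' [MOD q ^ γ * Co] → a z = a z')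
    (hq : q.Prime) (hqCo : q.Coprime Co) (hγ : γ ≠ 0) {t : ℕ} (ht : t ≠ 0) {y y' : ℕ}
    (hy : y ≡ 1 [MOD Co]) (hy' : y' ≡ 1 [MOD Co])
    (hyt : q ^ (t.factorization q + γ) ∣ y + t) (hyt' : q ^ (t.factorization q + γ) ∣ y' + t) :
    a y = a y' := by
  set β := t.factorization q
  -- `y` has `q`-valuation exactly `β`, since `y + t` is divisible by `q ^ (β + 1)`.
  have split : ∀ y, y ≡ 1 [MOD Co] → q ^ (β + γ) ∣ y + t →
      ∃ z, y = q ^ β * z ∧ z.Coprime (q ^ γ * Co) := by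
    intro y hy hyt
    obtain ⟨z, rfl⟩ : q ^ β ∣ y := (Nat.dvd_add_left (Nat.ordProj_dvd t q)).mp
      ((pow_dvd_pow q (Nat.le_add_right β γ)).trans hyt)
    refine ⟨z, rfl, Nat.Coprime.mul_right (Nat.Coprime.pow_right _ ?_) ?_⟩
    · refine Nat.coprime_comm.mp ((hq.coprime_iff_not_dvd).mpr fun hqz => ?_)
      have hy1 : q ^ (β + 1) ∣ q ^ β * z := by rw [pow_succ]; exact mul_dvd_mul_left _ hqz
      exact Nat.pow_succ_factorization_not_dvd ht hq <| (Nat.dvd_add_right hy1).mp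
        ((pow_dvd_pow q (by omega)).trans hyt)
    · exact Nat.Coprime.coprime_mul_left (hy.gcd_eq.trans (Nat.gcd_one_left Co))
  obtain ⟨z, rfl, hz⟩ := split y hy hyt
  obtain ⟨z', rfl, hz'⟩ := split y' hy' hyt'
  have hqM : q ∣ q ^ γ * Co := dvd_mul_of_dvd_left (dvd_pow_self q hγ) Co
  have hmod : q ^ β * z ≡ q ^ β * z' [MOD q ^ (β + γ) * Co] :=
    (Nat.modEq_and_modEq_iff_modEq_mul (Nat.Coprime.pow_left _ hqCo)).mp
      ⟨Nat.ModEq.add_right_cancel' t ((Nat.modEq_zero_iff_dvd.mpr hyt).trans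
        (Nat.modEq_zero_iff_dvd.mpr hyt').symm), hy.trans hy'.symm⟩
  rw [pow_add, mul_assoc] at hmod
  rw [ha.map_mul_of_coprime ((hz.coprime_dvd_right hqM).symm.pow_left β),
    ha.map_mul_of_coprime ((hz'.coprime_dvd_right hqM).symm.pow_left β),
    hunit z z' hz (Nat.ModEq.mul_left_cancel' (pow_ne_zero β hq.ne_zero) hmod)]

theorem IsMultiplicativeSeq.exists_pump_constant (ha : IsMultiplicativeSeq a)
    (hunit : ∀ z z', z.Coprime (q ^ γ * Co) → z ≡ z' [MOD q ^ γ * Co] → a z = a z')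
    (hpump : ∀ n, a (lam ^ i * n + 1) = a (lam ^ j * n + 1)) (hij : i < j) (hlam : 2 ≤ lam)
    (hq : q.Prime) (hqlam : q.Coprime lam) (hqCo : q.Coprime Co) (hγ : γ ≠ 0) :
    ∃ κ B, ∀ e, B ≤ e → ∀ w, ¬ q ∣ w → ∃ x', x'.Coprime (q ^ γ * Co) ∧ x' ≡ w [MOD q ^ γ] ∧
      q ^ e * x' ≡ 1 [MOD Co] ∧ a (q ^ e * x') = κ := by
  have ht : lam ^ (j - i) - 1 ≠ 0 := Nat.sub_ne_zero_of_lt (Nat.one_lt_pow (by omega) hlam)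
  set B := (lam ^ (j - i) - 1).factorization q + γ
  obtain ⟨-, y₀, -, -, -, hy₀, hy₀t, -⟩ :=
    exists_pump_witness hpump hij hq hqlam hqCo hγ B hq.not_dvd_one
  refine ⟨a y₀, B, fun e he w hw => ?_⟩
  obtain ⟨x', y, hx'M, hx'w, hx'Co, hy, hyt, hxy⟩ :=
    exists_pump_witness hpump hij hq hqlam hqCo hγ e hw
  exact ⟨x', hx'M, hx'w, hx'Co, hxy.trans (ha.apply_eq_of_add_dvd hunit hq hqCo hγ ht hy hy₀
    ((pow_dvd_pow q he).trans hyt) hy₀t)⟩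

theorem IsMultiplicativeSeq.conductor_dvd_of_pump_constant (ha : IsMultiplicativeSeq a)
    [NeZero M] (ψ : DirichletCharacter ℂ M) (hM : q ^ γ * Co = M)
    (haψ : ∀ n, n.Coprime M → a n = ψ n) (hq : q.Prime) (hqCo : q.Coprime Co) (hγ : γ ≠ 0)
    (hκ : ∀ e, B ≤ e → ∀ w, ¬ q ∣ w → ∃ x', x'.Coprime (q ^ γ * Co) ∧ x' ≡ w [MOD q ^ γ] ∧
      q ^ e * x' ≡ 1 [MOD Co] ∧ a (q ^ e * x') = κ) (hκ0 : κ ≠ 0) :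
    ψ.conductor ∣ Co := by
  subst hM
  have hqM : q ∣ q ^ γ * Co := dvd_mul_of_dvd_left (dvd_pow_self q hγ) Co
  have hsplit : ∀ x', x'.Coprime (q ^ γ * Co) → a (q ^ B * x') = a (q ^ B) * ψ x' :=
    fun x' hx' => by
      rw [ha.map_mul_of_coprime ((hx'.coprime_dvd_right hqM).symm.pow_left B), haψ x' hx']
  refine (ψ.mem_conductorSet_iff_conductor_dvd (dvd_mul_left Co _)).mp <|
    ψ.factorsThrough_of_forall_modEq_one (dvd_mul_left Co _) fun w hwM hw1 => ?_
  have hqw : ¬ q ∣ w := fun h => hq.one_lt.ne' (Nat.eq_one_of_dvd_one (hwM ▸ Nat.dvd_gcd h hqM))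
  -- With witnesses `x₁` for the class of `1` and `x` for that of `w`: `ψ w * ψ x₁ = ψ x = ψ x₁`.
  obtain ⟨x₁, hx₁M, hx₁q, hx₁Co, hx₁⟩ := hκ B le_rfl 1 hq.not_dvd_one
  obtain ⟨x, hxM, hxq, hxCo, hx⟩ := hκ B le_rfl w hqw
  rw [hsplit x₁ hx₁M] at hx₁
  rw [hsplit x hxM, ← hx₁] at hx
  have hxx₁ : x ≡ x₁ [MOD Co] :=
    Nat.ModEq.cancel_left_of_coprime (hqCo.pow_left B).symm (hxCo.trans hx₁Co.symm)
  have hmod : w * x₁ ≡ x [MOD q ^ γ * Co] :=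
    (Nat.modEq_and_modEq_iff_modEq_mul (hqCo.pow_left γ)).mp
      ⟨(Nat.ModEq.mul_left w hx₁q).trans (by rw [mul_one]; exact hxq.symm),
       (Nat.ModEq.mul_right x₁ hw1).trans (by rw [one_mul]; exact hxx₁.symm)⟩
  have hψ : ψ w * ψ x₁ = ψ x₁ := by
    rw [← map_mul, ← Nat.cast_mul, ψ.apply_eq_of_modEq dvd_rfl hmod,
      mul_left_cancel₀ (left_ne_zero_of_mul (hx₁ ▸ hκ0)) hx]
  exact mul_right_cancel₀ (right_ne_zero_of_mul (hx₁ ▸ hκ0)) (hψ.trans (one_mul _).symm)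

theorem IsMultiplicativeSeq.apply_pow_succ_eq_of_pump_constant (ha : IsMultiplicativeSeq a)
    [NeZero M] (ψ : DirichletCharacter ℂ M) (hM : q ^ γ * Co = M)
    (haψ : ∀ n, n.Coprime M → a n = ψ n) (hq : q.Prime) (hqCo : q.Coprime Co) (hγ : γ ≠ 0)
    (hκ : ∀ e, B ≤ e → ∀ w, ¬ q ∣ w → ∃ x', x'.Coprime (q ^ γ * Co) ∧ x' ≡ w [MOD q ^ γ] ∧
      q ^ e * x' ≡ 1 [MOD Co] ∧ a (q ^ e * x') = κ) :
    ∀ e, B ≤ e → a (q ^ (e + 1)) = ψ.primitiveCharacter q * a (q ^ e) := by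
  have hqM : q ∣ M := hM ▸ dvd_mul_of_dvd_left (dvd_pow_self q hγ) Co
  have hφ : ∀ x' : ℕ, x'.Coprime M → ψ.primitiveCharacter x' ≠ 0 := fun x' hx' => by
    rw [DirichletCharacter.primitiveCharacter_apply_natCast hx']
    exact ψ.apply_natCast_ne_zero hx'
  have hsplit : ∀ e x', x'.Coprime M →
      a (q ^ e * x') = a (q ^ e) * ψ.primitiveCharacter x' := fun e x' hx' => by
    rw [ha.map_mul_of_coprime ((hx'.coprime_dvd_right hqM).symm.pow_left e), haψ x' hx',
      DirichletCharacter.primitiveCharacter_apply_natCast hx']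
  intro e he
  obtain ⟨x₀, hx₀M, -, hx₀Co, hx₀⟩ := hκ e he 1 hq.not_dvd_one
  obtain ⟨x₁, hx₁M, -, hx₁Co, hx₁⟩ := hκ (e + 1) (he.trans e.le_succ) 1 hq.not_dvd_one
  rw [hM] at hx₀M hx₁M
  rw [hsplit _ _ hx₀M] at hx₀
  rw [hsplit _ _ hx₁M] at hx₁
  by_cases hκ0 : κ = 0
  · rw [hκ0] at hx₀ hx₁
    rw [(mul_eq_zero.mp hx₀).resolve_right (hφ x₀ hx₀M),
      (mul_eq_zero.mp hx₁).resolve_right (hφ x₁ hx₁M), mul_zero]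
  have hmod : q * x₁ ≡ x₀ [MOD Co] := Nat.ModEq.cancel_left_of_coprime (hqCo.pow_left e).symm
    (by rw [← mul_assoc, ← pow_succ]; exact hx₁Co.trans hx₀Co.symm)
  have hφq : ψ.primitiveCharacter q * ψ.primitiveCharacter x₁ = ψ.primitiveCharacter x₀ := by
    rw [← map_mul, ← Nat.cast_mul]
    exact DirichletCharacter.apply_eq_of_modEq
      (ha.conductor_dvd_of_pump_constant ψ hM haψ hq hqCo hγ hκ hκ0) hmod
  refine mul_right_cancel₀ (hφ x₁ hx₁M) ?_
  rw [hx₁, ← hx₀, ← hφq]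
  ring

end

section

variable {a : ℕ → ℂ} {M : ℕ}

theorem apply_pow_succ_eq_of_coprime {ψ : DirichletCharacter ℂ M}
    (haψ : ∀ n, n.Coprime M → a n = ψ n) {r : ℕ} (hr : r.Coprime M) (j : ℕ) :
    a (r ^ (j + 1)) = ψ.primitiveCharacter r * a (r ^ j) := by
  rw [haψ _ (hr.pow_left _), haψ _ (hr.pow_left _),
    ← DirichletCharacter.primitiveCharacter_apply_natCast (hr.pow_left _),
    ← DirichletCharacter.primitiveCharacter_apply_natCast (hr.pow_left _), pow_succ',
    Nat.cast_mul, map_mul]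

theorem IsMultiplicativeSeq.exists_apply_pow_succ_eq_of_mem_primeFactors
    (ha : IsMultiplicativeSeq a) {lam h : ℕ} (haut : IsAutomatic lam a) (hlam : 2 ≤ lam)
    (hcop : h.Coprime lam) [NeZero (h * lam)] (ψ : DirichletCharacter ℂ (h * lam))
    (haψ : ∀ n, n.Coprime (h * lam) → a n = ψ n) {q : ℕ} (hq : q ∈ h.primeFactors) :
    ∃ B, ∀ e, B ≤ e → a (q ^ (e + 1)) = ψ.primitiveCharacter q * a (q ^ e) := by
  obtain ⟨i, j, hij, hpump⟩ := haut.exists_pow_mul_add_one_eq hlam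
  obtain ⟨hqp, hqh, hh⟩ := Nat.mem_primeFactors.mp hq
  have hM : q ^ h.factorization q * (lam * (h / q ^ h.factorization q)) = h * lam := by
    rw [mul_left_comm, Nat.ordProj_mul_ordCompl_eq_self, mul_comm]
  have hqlam : q.Coprime lam := hcop.coprime_dvd_left hqh
  have hqCo := Nat.Coprime.mul_right hqlam (Nat.coprime_ordCompl hqp hh)
  have hγ : h.factorization q ≠ 0 := Finsupp.mem_support_iff.mp (h.support_factorization ▸ hq)
  have hunit : ∀ z z', z.Coprime (h * lam) → z ≡ z' [MOD h * lam] → a z = a z' :=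
    fun z z' hz hzz' => by
      rw [haψ z hz, haψ z' (hzz'.gcd_eq.symm.trans hz), ψ.apply_eq_of_modEq dvd_rfl hzz']
  rw [← hM] at hunit
  obtain ⟨κ, B, hκ⟩ := ha.exists_pump_constant hunit hpump hij hlam hqp hqlam hqCo hγ
  exact ⟨B, ha.apply_pow_succ_eq_of_pump_constant ψ hM haψ hqp hqCo hγ hκ⟩

theorem IsMultiplicativeSeq.exists_period_of_not_dvd (ha : IsMultiplicativeSeq a) {p α h : ℕ}
    (hp : p.Prime) (hα : 1 ≤ α) (hcop : h.Coprime (p ^ α)) (haut : IsAutomatic (p ^ α) a)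
    [NeZero (h * p ^ α)] (ψ : DirichletCharacter ℂ (h * p ^ α))
    (haψ : ∀ n, n.Coprime (h * p ^ α) → a n = ψ n) :
    ∃ D, 1 ≤ D ∧ p ∣ D ∧ ∀ n, n ≠ 0 → ¬ p ∣ n → a (n + D) = a n := by
  have hlam : 2 ≤ p ^ α := hp.two_le.trans (Nat.le_self_pow (by omega) p)
  choose! B hB using fun q (hq : q ∈ h.primeFactors) =>
    ha.exists_apply_pow_succ_eq_of_mem_primeFactors haut hlam hcop ψ haψ hq
  set L := ∏ q ∈ h.primeFactors, q ^ B q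
  have hL : L ≠ 0 := Finset.prod_ne_zero_iff.mpr fun q hq =>
    pow_ne_zero _ (Nat.prime_of_mem_primeFactors hq).ne_zero
  have hpM : p ∣ h * p ^ α := dvd_mul_of_dvd_right (dvd_pow_self p (by omega)) h
  refine ⟨L * (h * p ^ α), Nat.pos_of_ne_zero (mul_ne_zero hL (NeZero.ne _)),
    dvd_mul_of_dvd_right hpM L, fun n hn hpn => ha.apply_add_mul_eq_of_geometric
      ψ.primitiveCharacter hL ψ.conductor_dvd_level hpM (fun r hr hrp j hj => ?_) hn hpn⟩
  by_cases hrh : r ∈ h.primeFactors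
  · exact hB r hrh j (le_trans ((hr.pow_dvd_iff_le_factorization hL).mp
      (Finset.dvd_prod_of_mem (fun q => q ^ B q) hrh)) hj)
  · refine apply_pow_succ_eq_of_coprime haψ (Nat.Coprime.mul_right ?_ ?_) j
    · exact (hr.coprime_iff_not_dvd).mpr fun hrh' => hrh <|
        Nat.mem_primeFactors.mpr ⟨hr, hrh', left_ne_zero_of_mul (NeZero.ne (h * p ^ α))⟩
    · exact Nat.Coprime.pow_right α ((Nat.coprime_primes hr hp).mpr hrp)

end

theorem stmt_16 (p : ℕ) (hp : p.Prime) (α : ℕ) (hα : 1 ≤ α)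
    (lam : ℕ) (hlamdef : lam = p ^ α)
    (h : ℕ) (hh : 1 ≤ h) (hcop : Nat.Coprime h lam)
    (a : ℕ → ℂ) (haut : IsAutomatic lam a) (ha : IsMultiplicativeSeq a)
    (χ : ℕ → ℂ) (hχ : IsDirichletCharacterSeq (h * lam) χ)
    (haχ : ∀ n : ℕ, 1 ≤ n → Nat.Coprime n (h * lam) → a n = χ n) :
    ∃ f₁ f₂ : ℕ → ℂ,
      EventuallyPeriodicSeq f₁ ∧ f₁ 0 = 1 ∧
      IsMultiplicativeSeq f₂ ∧
      (∃ d : ℕ, 1 ≤ d ∧ ∀ n : ℕ, 1 ≤ n → f₂ (n + d) = f₂ n) ∧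
      ∀ n : ℕ, 1 ≤ n →
        a n = f₁ (padicValNat p n) * f₂ (n / p ^ padicValNat p n) := by
  subst hlamdef
  have : NeZero (h * p ^ α) := ⟨mul_ne_zero (by omega) (pow_ne_zero α hp.ne_zero)⟩
  obtain ⟨ψ, hψ⟩ := hχ.exists_dirichletCharacter
  have haψ : ∀ n, n.Coprime (h * p ^ α) → a n = ψ n := fun n hn => by
    refine (haχ n (Nat.pos_of_ne_zero fun h0 => hp.not_dvd_one ?_) hn).trans (hψ n).symm
    rw [h0, Nat.coprime_zero_left] at hn
    exact hn ▸ dvd_mul_of_dvd_right (dvd_pow_self p (by omega)) h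
  obtain ⟨D, hD, hpD, hper⟩ := ha.exists_period_of_not_dvd hp hα hcop haut ψ haψ
  exact ha.exists_decomposition hp (haut.eventuallyPeriodicSeq_pow hp.ne_zero hα) hD hpD hper
end
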